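/- Let ν ∈ ℝ with ν ≠ 0, and let ε ∈ {1, −1}. Define c := Γ(1 − iν)·Γ(iν)·e^{επν} + ln 2 + 2γ + Γ′(1 + iν)/Γ(1 + iν) + iπ/2 + i/(2ν), where γ is the Euler–Mascheroni constant and Γ′ is the complex derivative of the complex Gamma function Γ. Then Im(c) ≠ π(1 − ε)/2. -/

import Mathlib

/-!
Write `ψ = Γ'/Γ`. The reflection formula gives `Γ(iν)Γ(1 - iν) = -iπ / sinh(πν)`, and together with
`Γ(1 + iν) = iν Γ(iν)` and `Γ(conj z) = conj Γ(z)` it gives `|Γ(1 + iν)|² = πν / sinh(πν)`.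
Differentiating this identity in `ν` yields `Im ψ(1 + iν) = π coth(πν) / 2 - 1 / (2ν)`, so that for
`ε = ±1`, where `e^{επν} = cosh(πν) + ε sinh(πν)`,
`Im c = π(1 - ε)/2 - π e^{επν} / (2 sinh(πν))`, and the last term never vanishes.
-/

open Complex Real

/-- The connection coefficient `c^{ν,κ}_{+,ε}` in the degenerate case `ν² = κ² ≠ 0`:
`c = Γ(1−iν)·Γ(iν)·e^{επν} + ln 2 + 2γ + Γ′(1+iν)/Γ(1+iν) + iπ/2 + i/(2ν)`,
with `γ` the Euler–Mascheroni constant. -/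
noncomputable def cDeg (ν ε : ℝ) : ℂ :=
  Complex.Gamma (1 - I * (ν : ℂ)) * Complex.Gamma (I * (ν : ℂ)) *
      (Real.exp (ε * π * ν) : ℂ) +
    (Real.log 2 : ℂ) + 2 * (Real.eulerMascheroniConstant : ℂ) +
    deriv Complex.Gamma (1 + I * (ν : ℂ)) / Complex.Gamma (1 + I * (ν : ℂ)) +
    I * (π : ℂ) / 2 + I / (2 * (ν : ℂ))

open scoped ComplexConjugate Topology

theorem HasDerivAt.re_div_of_hasDerivAt_norm_sq {f : ℝ → ℂ} {f' : ℂ} {r t : ℝ}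
    (hf : HasDerivAt f f' t) (hr : HasDerivAt (‖f ·‖ ^ 2) r t) :
    (f' / f t).re = r / (2 * ‖f t‖ ^ 2) := by
  rw [hr.unique hf.norm_sq, Complex.inner, Complex.div_re, ← Complex.normSq_eq_norm_sq]
  simp only [Complex.mul_re, Complex.conj_re, Complex.conj_im]
  by_cases h : Complex.normSq (f t) = 0
  · simp [h]
  field_simp
  ring

theorem Complex.Gamma_I_mul_mul_Gamma_one_sub_I_mul (t : ℝ) :
    Gamma (I * t) * Gamma (1 - I * t) = -I * π / (Real.sinh (π * t) : ℂ) := by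
  rw [Gamma_mul_Gamma_one_sub, show (π : ℂ) * (I * t) = (π * t : ℝ) * I by push_cast; ring,
    sin_mul_I, ← ofReal_sinh, div_mul_eq_div_div, div_I]
  ring

theorem Complex.norm_Gamma_one_add_I_mul_sq {t : ℝ} (ht : t ≠ 0) :
    ‖Gamma (1 + I * t)‖ ^ 2 = π * t / Real.sinh (π * t) := by
  have hconj : conj (Gamma (1 + I * t)) = Gamma (1 - I * t) := by
    rw [← Gamma_conj]; simp [sub_eq_add_neg]
  have hshift : Gamma (1 + I * t) = I * t * Gamma (I * t) := by
    rw [add_comm, Gamma_add_one _ (by simpa using ht)]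
  apply ofReal_injective
  push_cast
  rw [← mul_conj', hconj]
  nth_rw 1 [hshift]
  rw [mul_assoc, Gamma_I_mul_mul_Gamma_one_sub_I_mul]
  push_cast
  linear_combination (-(π * t : ℂ) / Complex.sinh (π * t)) * I_sq

theorem Complex.im_deriv_Gamma_div_Gamma_one_add_I_mul {t : ℝ} (ht : t ≠ 0) :
    (deriv Gamma (1 + I * t) / Gamma (1 + I * t)).im =
      π * Real.cosh (π * t) / (2 * Real.sinh (π * t)) - 1 / (2 * t) := by
  have hne : ∀ m : ℕ, 1 + I * t ≠ -m := fun m h => ht (by simpa using congrArg im h)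
  have hS : Real.sinh (π * t) ≠ 0 := Real.sinh_ne_zero.2 (mul_ne_zero pi_ne_zero ht)
  have hline : HasDerivAt (fun s : ℂ => 1 + I * s) I t := by
    simpa using ((hasDerivAt_id (t : ℂ)).const_mul I).const_add 1
  have hf : HasDerivAt (fun s : ℝ => Gamma (1 + I * s)) (deriv Gamma (1 + I * t) * I) t :=
    ((differentiableAt_Gamma _ hne).hasDerivAt.comp (t : ℂ) hline).comp_ofReal
  have hπt : HasDerivAt (fun s : ℝ => π * s) π t := by
    simpa using (hasDerivAt_id t).const_mul π
  have hnorm : (fun s : ℝ => ‖Gamma (1 + I * s)‖ ^ 2) =ᶠ[𝓝 t]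
      fun s => π * s / Real.sinh (π * s) := by
    filter_upwards [isOpen_ne.mem_nhds ht] with s hs
    exact norm_Gamma_one_add_I_mul_sq hs
  have key := hf.re_div_of_hasDerivAt_norm_sq ((hπt.div hπt.sinh hS).congr_of_eventuallyEq hnorm)
  rw [mul_div_right_comm, mul_I_re, norm_Gamma_one_add_I_mul_sq ht] at key
  rw [← neg_neg (im _), key]
  field_simp
  ring

theorem cDeg_im {ν : ℝ} (hν : ν ≠ 0) (ε : ℝ) :
    (cDeg ν ε).im = π * Real.cosh (π * ν) / (2 * Real.sinh (π * ν)) + π / 2 -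
      π * Real.exp (ε * π * ν) / Real.sinh (π * ν) := by
  have hreflection : -I * π / (Real.sinh (π * ν) : ℂ) * (Real.exp (ε * π * ν) : ℂ) =
      (-(π * Real.exp (ε * π * ν) / Real.sinh (π * ν)) : ℝ) * I := by
    push_cast; ring
  have hγ : (2 : ℂ) * eulerMascheroniConstant = (2 * eulerMascheroniConstant : ℝ) := by
    push_cast; ring
  have hhalf : I * π / 2 = (π / 2 : ℝ) * I := by
    push_cast; ring
  have hpole : I / (2 * (ν : ℂ)) = (1 / (2 * ν) : ℝ) * I := by
    push_cast; ring
  rw [cDeg, mul_comm (Complex.Gamma _), Complex.Gamma_I_mul_mul_Gamma_one_sub_I_mul, hreflection,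
    hγ, hhalf, hpole]
  simp only [add_im, im_ofReal_mul, I_im, ofReal_im, mul_one,
    Complex.im_deriv_Gamma_div_Gamma_one_add_I_mul hν]
  ring

/-- For real `ν ≠ 0` and `ε = ±1`, `Im(c^{ν,κ}_{+,ε}) ≠ π(1 − ε)/2`. -/
theorem cDeg_im_ne (ν : ℝ) (hν : ν ≠ 0) (ε : ℝ) (hε : ε = 1 ∨ ε = -1) :
    (cDeg ν ε).im ≠ π * (1 - ε) / 2 := by
  have hexp : Real.exp (ε * π * ν) = Real.cosh (π * ν) + ε * Real.sinh (π * ν) := by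
    rcases hε with rfl | rfl
    · simp [Real.cosh_add_sinh]
    · simp [← Real.cosh_sub_sinh, sub_eq_add_neg]
  have hdiff : (cDeg ν ε).im - π * (1 - ε) / 2 =
      -(π * Real.exp (ε * π * ν) / (2 * Real.sinh (π * ν))) := by
    rw [cDeg_im hν, hexp]
    field_simp
    ring
  rw [← sub_ne_zero, hdiff, neg_ne_zero]
  positivity
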